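/- Assume 𝒢 is connected. If (λ, f) is an eigenpair of ℋ_p with f(u) > 0 for every u ∈ V, then λ = (Σ_{u∈V} κ_u f(u)^{p−1})/(Σ_{u∈V} ϱ_u f(u)^{p−1}); in particular min_{u∈V} κ_u/ϱ_u ≤ λ ≤ max_{u∈V} κ_u/ϱ_u. Consequently, the first variational eigenvalue λ₁ = min_{g ∈ 𝒮_p} ℛ(g) satisfies min_{u∈V} κ_u/ϱ_u ≤ λ₁ ≤ max_{u∈V} κ_u/ϱ_u. -/

import Mathlib

/-!
Summing the eigenvalue equation over all vertices cancels the edge terms, because `ω` is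
symmetric and `φ_p` is odd. For a positive eigenfunction what remains is
`λ ∑ ϱ f^{p-1} = ∑ κ f^{p-1}`, so `λ` is a weighted mean of the ratios `κ/ϱ`. For `λ₁`, the edge
energy in the Rayleigh quotient of a minimiser is nonnegative and what is left is again a
weighted mean of `κ/ϱ`; from above, `λ₁` is at most the Rayleigh quotient of a constant function
on `𝒮_p`, which is a weighted mean of `κ/ϱ` as well.
-/


noncomputable section

open Finset

/-- `φ_p(x) = |x|^{p-2} x` (real exponent, `φ_p(0) = 0`). -/
def phiP (p x : ℝ) : ℝ := |x| ^ (p - 2) * x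

/-- The generalized `p`-Laplacian `ℋ_p`.  The edge-weight function `ω` is assumed to be
symmetric and to vanish on pairs of non-adjacent vertices, so the sum over all vertices
is the sum over the neighbours of `u`. -/
def genLap {V : Type*} [Fintype V] (ω : V → V → ℝ) (κ : V → ℝ) (p : ℝ)
    (f : V → ℝ) (u : V) : ℝ :=
  (∑ v : V, ω u v * phiP p (f u - f v)) + κ u * phiP p (f u)

/-- `(lam, f)` is an eigenpair of `ℋ_p`. -/
def IsEigenpair {V : Type*} [Fintype V] (ω : V → V → ℝ) (κ ϱ : V → ℝ) (p lam : ℝ)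
    (f : V → ℝ) : Prop :=
  f ≠ 0 ∧ ∀ u, genLap ω κ p f u = lam * (ϱ u * phiP p (f u))

/-- The Rayleigh quotient `ℛ` of `ℋ_p` (each edge `uv` is counted once: the double sum
counts it twice, whence the factor `1/2`). -/
def rayleigh {V : Type*} [Fintype V] (ω : V → V → ℝ) (κ ϱ : V → ℝ) (p : ℝ)
    (f : V → ℝ) : ℝ :=
  ((1 / 2) * ∑ u : V, ∑ v : V, ω u v * |f u - f v| ^ p + ∑ u : V, κ u * |f u| ^ p) /
    ∑ u : V, ϱ u * |f u| ^ p

/-- The `p`-sphere `𝒮_p`. -/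
def pSphere (V : Type*) [Fintype V] (p : ℝ) : Set (V → ℝ) := {f | ∑ u : V, |f u| ^ p = 1}

/-- The Krasnoselskii genus of a (symmetric) subset of `ℝ^V`. -/
def krasGenus {V : Type*} [Fintype V] (A : Set (V → ℝ)) : ℕ∞ :=
  sInf {n : ℕ∞ | ∃ k : ℕ, n = (k : ℕ∞) ∧ ∃ φ : (V → ℝ) → (Fin k → ℝ),
    ContinuousOn φ A ∧ (∀ x ∈ A, φ (-x) = -φ x) ∧ ∀ x ∈ A, φ x ≠ 0}

/-- The `k`-th variational eigenvalue of `ℋ_p`: the min over closed symmetric subsets of the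
`p`-sphere of genus at least `k` of the max of the Rayleigh quotient. -/
def varEig {V : Type*} [Fintype V] (ω : V → V → ℝ) (κ ϱ : V → ℝ) (p : ℝ) (k : ℕ) : ℝ :=
  sInf {r : ℝ | ∃ A : Set (V → ℝ), A ⊆ pSphere V p ∧ IsClosed A ∧ (∀ f ∈ A, -f ∈ A) ∧
    (k : ℕ∞) ≤ krasGenus A ∧ IsGreatest (rayleigh ω κ ϱ p '' A) r}

/-- The subgraph `𝒢₊(f)`: vertices where `f ≠ 0`, edges where `f` has equal nonzero signs. -/
def posGraph {V : Type*} (G : SimpleGraph V) (f : V → ℝ) : SimpleGraph V where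
  Adj u v := G.Adj u v ∧ 0 < f u * f v
  symm := by
    refine ⟨?_⟩
    intro u v h
    exact ⟨h.1.symm, by rw [mul_comm]; exact h.2⟩
  loopless := ⟨fun u h => G.loopless.irrefl u h.1⟩

/-- The number `ν(f)` of (strong) nodal domains of `f`: the number of connected components of
`𝒢₊(f)` consisting of vertices where `f` is nonzero. -/
def nodalCount {V : Type*} (G : SimpleGraph V) (f : V → ℝ) : ℕ :=
  {c : (posGraph G f).ConnectedComponent |
    ∀ u, (posGraph G f).connectedComponentMk u = c → f u ≠ 0}.ncard

/-- The subgraph of edges on which `f` changes sign. -/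
def negGraph {V : Type*} (G : SimpleGraph V) (f : V → ℝ) : SimpleGraph V where
  Adj u v := G.Adj u v ∧ f u * f v < 0
  symm := by
    refine ⟨?_⟩
    intro u v h
    exact ⟨h.1.symm, by rw [mul_comm]; exact h.2⟩
  loopless := ⟨fun u h => G.loopless.irrefl u h.1⟩

/-- `ζ(f)`: the number of edges on which `f` changes sign. -/
def zetaCount {V : Type*} [Fintype V] (G : SimpleGraph V) (f : V → ℝ) : ℕ :=
  (negGraph G f).edgeSet.ncard

/-- `z(f)`: the number of vertices where `f` vanishes. -/
def zeroCount {V : Type*} [Fintype V] (f : V → ℝ) : ℕ := {u : V | f u = 0}.ncard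

/-- `l(f)`: the number of independent loops (cycle rank) of `𝒢₊(f)`,
`|E(𝒢₊(f))| − |V(𝒢₊(f))| + ν(f)`. -/
def loopCount {V : Type*} [Fintype V] (G : SimpleGraph V) (f : V → ℝ) : ℤ :=
  ((posGraph G f).edgeSet.ncard : ℤ) - ({u : V | f u ≠ 0}.ncard : ℤ) + (nodalCount G f : ℤ)

/-- The subgraph `𝒢'(f)` of `𝒢` induced on the support of `f` (vertices with `f = 0` are
deleted together with all incident edges; in this encoding they are kept as isolated
vertices, which are discarded in the counts below). -/
def suppGraph {V : Type*} (G : SimpleGraph V) (f : V → ℝ) : SimpleGraph V where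
  Adj u v := G.Adj u v ∧ f u ≠ 0 ∧ f v ≠ 0
  symm := by
    refine ⟨?_⟩
    intro u v h
    exact ⟨h.1.symm, h.2.2, h.2.1⟩
  loopless := ⟨fun u h => G.loopless.irrefl u h.1⟩

/-- `c(f)`: the number of connected components of `𝒢'(f)`. -/
def compCount {V : Type*} (G : SimpleGraph V) (f : V → ℝ) : ℕ :=
  {c : (suppGraph G f).ConnectedComponent |
    ∀ u, (suppGraph G f).connectedComponentMk u = c → f u ≠ 0}.ncard

/-- `β'(f)`: the number of independent loops of `𝒢'(f)`,
`|E(𝒢'(f))| − |V(𝒢'(f))| + c(f)`. -/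
def betaSupp {V : Type*} [Fintype V] (G : SimpleGraph V) (f : V → ℝ) : ℤ :=
  ((suppGraph G f).edgeSet.ncard : ℤ) - ({u : V | f u ≠ 0}.ncard : ℤ) + (compCount G f : ℤ)

lemma phiP_of_pos (p : ℝ) {x : ℝ} (hx : 0 < x) : phiP p x = x ^ (p - 1) := by
  rw [phiP, abs_of_pos hx, show p - 1 = (p - 2) + 1 by ring, Real.rpow_add_one hx.ne']

lemma phiP_neg (p x : ℝ) : phiP p (-x) = -phiP p x := by
  simp only [phiP, abs_neg, mul_neg]

theorem Finset.sum_sum_eq_zero_of_antisymm {ι M : Type*} [AddCommGroup M] [IsAddTorsionFree M]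
    (s : Finset ι) (F : ι → ι → M) (hF : ∀ i j, F j i = -F i j) :
    ∑ i ∈ s, ∑ j ∈ s, F i j = 0 := by
  refine self_eq_neg.mp ?_
  calc ∑ i ∈ s, ∑ j ∈ s, F i j = ∑ i ∈ s, ∑ j ∈ s, F j i := Finset.sum_comm
    _ = -∑ i ∈ s, ∑ j ∈ s, F i j := by
      rw [← sum_neg_distrib]
      refine sum_congr rfl fun i _ => ?_
      rw [← sum_neg_distrib]
      exact sum_congr rfl fun j _ => hF i j

section WeightedMean

variable {ι : Type*} {s : Finset ι} (hs : s.Nonempty) {a b w : ι → ℝ}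

lemma Finset.inf'_div_le_sum_mul_div_sum_mul (hb : ∀ i ∈ s, 0 < b i) (hw : ∀ i ∈ s, 0 ≤ w i)
    (hbw : 0 < ∑ i ∈ s, b i * w i) :
    s.inf' hs (fun i => a i / b i) ≤ (∑ i ∈ s, a i * w i) / ∑ i ∈ s, b i * w i := by
  rw [le_div_iff₀ hbw, mul_sum]
  refine sum_le_sum fun i hi => ?_
  have : s.inf' hs (fun i => a i / b i) * b i ≤ a i :=
    (le_div_iff₀ (hb i hi)).mp (inf'_le (fun i => a i / b i) hi)
  rw [← mul_assoc]
  exact mul_le_mul_of_nonneg_right this (hw i hi)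

lemma Finset.sum_mul_div_sum_mul_le_sup'_div (hb : ∀ i ∈ s, 0 < b i) (hw : ∀ i ∈ s, 0 ≤ w i)
    (hbw : 0 < ∑ i ∈ s, b i * w i) :
    (∑ i ∈ s, a i * w i) / ∑ i ∈ s, b i * w i ≤ s.sup' hs (fun i => a i / b i) := by
  rw [div_le_iff₀ hbw, mul_sum]
  refine sum_le_sum fun i hi => ?_
  have : a i ≤ s.sup' hs (fun i => a i / b i) * b i :=
    (div_le_iff₀ (hb i hi)).mp (le_sup' (fun i => a i / b i) hi)
  rw [← mul_assoc]
  exact mul_le_mul_of_nonneg_right this (hw i hi)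

end WeightedMean

section Eigenvalues

variable {V : Type*} [Fintype V] {ω : V → V → ℝ} {κ ϱ : V → ℝ} {p : ℝ}

lemma sum_genLap (hω : ∀ u v, ω u v = ω v u) (f : V → ℝ) :
    ∑ u, genLap ω κ p f u = ∑ u, κ u * phiP p (f u) := by
  have hedges : ∑ u, ∑ v, ω u v * phiP p (f u - f v) = 0 :=
    sum_sum_eq_zero_of_antisymm _ _ fun u v => by
      rw [hω v u, ← neg_sub, phiP_neg, mul_neg]
  simp only [genLap, sum_add_distrib, hedges, zero_add]

lemma IsEigenpair.eq_div_of_pos {lam : ℝ} {f : V → ℝ} (h : IsEigenpair ω κ ϱ p lam f)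
    (hω : ∀ u v, ω u v = ω v u) (hϱ : ∀ u, 0 < ϱ u) (hf : ∀ u, 0 < f u) :
    lam = (∑ u, κ u * f u ^ (p - 1)) / ∑ u, ϱ u * f u ^ (p - 1) := by
  obtain ⟨u₀, -⟩ := Function.ne_iff.mp h.1
  have hden : 0 < ∑ u, ϱ u * f u ^ (p - 1) :=
    sum_pos (fun u _ => mul_pos (hϱ u) (Real.rpow_pos_of_pos (hf u) _)) ⟨u₀, mem_univ _⟩
  have hsum := sum_genLap (κ := κ) (p := p) hω f
  simp only [h.2, ← mul_sum, phiP_of_pos p (hf _)] at hsum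
  rw [eq_div_iff hden.ne', hsum]

lemma sum_mul_rpow_pos_of_mem_pSphere (hp : p ≠ 0) (hϱ : ∀ u, 0 < ϱ u) {f : V → ℝ}
    (hf : f ∈ pSphere V p) : 0 < ∑ u, ϱ u * |f u| ^ p := by
  obtain ⟨u₀, hu₀⟩ : ∃ u, f u ≠ 0 := by
    by_contra! h
    simp [pSphere, h, Real.zero_rpow hp] at hf
  exact sum_pos' (fun u _ => mul_nonneg (hϱ u).le (by positivity))
    ⟨u₀, mem_univ _, mul_pos (hϱ u₀) (Real.rpow_pos_of_pos (abs_pos.mpr hu₀) _)⟩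

lemma const_mem_pSphere [Nonempty V] (hp : p ≠ 0) :
    (fun _ : V => (Fintype.card V : ℝ)⁻¹ ^ p⁻¹) ∈ pSphere V p := by
  have hcard : (0 : ℝ) < Fintype.card V := Nat.cast_pos.mpr Fintype.card_pos
  rw [pSphere, Set.mem_ofPred_eq, sum_const, card_univ, nsmul_eq_mul,
    abs_of_nonneg (by positivity), Real.rpow_inv_rpow (by positivity) hp, mul_inv_cancel₀ hcard.ne']

lemma inf'_le_rayleigh [Nonempty V] (hω : ∀ u v, 0 ≤ ω u v) (hϱ : ∀ u, 0 < ϱ u) {f : V → ℝ}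
    (hf : 0 < ∑ u, ϱ u * |f u| ^ p) :
    univ.inf' univ_nonempty (fun u => κ u / ϱ u) ≤ rayleigh ω κ ϱ p f := by
  have henergy : 0 ≤ (1 / 2) * ∑ u, ∑ v, ω u v * |f u - f v| ^ p := by
    refine mul_nonneg (by norm_num) (sum_nonneg fun u _ => sum_nonneg fun v _ => ?_)
    exact mul_nonneg (hω u v) (by positivity)
  calc univ.inf' univ_nonempty (fun u => κ u / ϱ u)
      ≤ (∑ u, κ u * |f u| ^ p) / ∑ u, ϱ u * |f u| ^ p :=
        inf'_div_le_sum_mul_div_sum_mul _ (fun u _ => hϱ u) (fun u _ => by positivity) hf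
    _ ≤ rayleigh ω κ ϱ p f := by
        rw [rayleigh]
        gcongr
        linarith

lemma rayleigh_const_le_sup' [Nonempty V] (hp : p ≠ 0) (hϱ : ∀ u, 0 < ϱ u) {c : ℝ} (hc : c ≠ 0) :
    rayleigh ω κ ϱ p (fun _ => c) ≤ univ.sup' univ_nonempty (fun u => κ u / ϱ u) := by
  have hcp : 0 < |c| ^ p := Real.rpow_pos_of_pos (abs_pos.mpr hc) p
  have hden : 0 < ∑ u, ϱ u * |c| ^ p := sum_pos (fun u _ => mul_pos (hϱ u) hcp) univ_nonempty
  simp only [rayleigh, sub_self, abs_zero, Real.zero_rpow hp, mul_zero, sum_const_zero, zero_add]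
  exact sum_mul_div_sum_mul_le_sup'_div _ (fun u _ => hϱ u) (fun _ _ => hcp.le) hden

end Eigenvalues

theorem stmt9_general {V : Type*} [Fintype V] [Nonempty V]
    (G : SimpleGraph V) (ω : V → V → ℝ) (κ ϱ : V → ℝ) (p : ℝ) (hp : 1 < p)
    (hωsymm : ∀ u v, ω u v = ω v u)
    (hωpos : ∀ u v, G.Adj u v → 0 < ω u v)
    (hωzero : ∀ u v, ¬ G.Adj u v → ω u v = 0)
    (hϱpos : ∀ u, 0 < ϱ u)
    (lam1 : ℝ) (hlam1 : IsLeast (rayleigh ω κ ϱ p '' pSphere V p) lam1) :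
    (∀ (lam : ℝ) (f : V → ℝ), IsEigenpair ω κ ϱ p lam f → (∀ u, 0 < f u) →
      lam = (∑ u : V, κ u * f u ^ (p - 1)) / (∑ u : V, ϱ u * f u ^ (p - 1)) ∧
      Finset.univ.inf' Finset.univ_nonempty (fun u : V => κ u / ϱ u) ≤ lam ∧
      lam ≤ Finset.univ.sup' Finset.univ_nonempty (fun u : V => κ u / ϱ u)) ∧
    Finset.univ.inf' Finset.univ_nonempty (fun u : V => κ u / ϱ u) ≤ lam1 ∧
    lam1 ≤ Finset.univ.sup' Finset.univ_nonempty (fun u : V => κ u / ϱ u) := by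
  have hp₀ : p ≠ 0 := by positivity
  have hω : ∀ u v, 0 ≤ ω u v := fun u v => by
    by_cases h : G.Adj u v
    exacts [(hωpos u v h).le, (hωzero u v h).ge]
  obtain ⟨⟨g, hg, rfl⟩, hmin⟩ := hlam1
  refine ⟨fun lam f hf hfpos => ?_, inf'_le_rayleigh hω hϱpos
    (sum_mul_rpow_pos_of_mem_pSphere hp₀ hϱpos hg), ?_⟩
  · have hweight : ∀ u ∈ univ, 0 ≤ f u ^ (p - 1) := fun u _ => Real.rpow_nonneg (hfpos u).le _
    have hden : 0 < ∑ u, ϱ u * f u ^ (p - 1) :=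
      sum_pos (fun u _ => mul_pos (hϱpos u) (Real.rpow_pos_of_pos (hfpos u) _)) univ_nonempty
    have hlam := hf.eq_div_of_pos hωsymm hϱpos hfpos
    refine ⟨hlam, ?_, ?_⟩ <;> rw [hlam]
    exacts [inf'_div_le_sum_mul_div_sum_mul _ (fun u _ => hϱpos u) hweight hden,
      sum_mul_div_sum_mul_le_sup'_div _ (fun u _ => hϱpos u) hweight hden]
  · exact (hmin ⟨_, const_mem_pSphere hp₀, rfl⟩).trans
      (rayleigh_const_le_sup' hp₀ hϱpos (by positivity))

/-- characterization and bounds for an eigenvalue with positive eigenfunction,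
and the resulting bounds for the first variational eigenvalue `λ₁ = min_{g ∈ 𝒮_p} ℛ(g)`. -/
theorem stmt9 {V : Type*} [Fintype V] [Nonempty V]
    (G : SimpleGraph V) (ω : V → V → ℝ) (κ ϱ : V → ℝ) (p : ℝ) (hp : 1 < p)
    (hωsymm : ∀ u v, ω u v = ω v u)
    (hωpos : ∀ u v, G.Adj u v → 0 < ω u v)
    (hωzero : ∀ u v, ¬ G.Adj u v → ω u v = 0)
    (hϱpos : ∀ u, 0 < ϱ u)
    (hconn : G.Connected)
    (lam1 : ℝ) (hlam1 : IsLeast (rayleigh ω κ ϱ p '' pSphere V p) lam1) :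
    (∀ (lam : ℝ) (f : V → ℝ), IsEigenpair ω κ ϱ p lam f → (∀ u, 0 < f u) →
      lam = (∑ u : V, κ u * f u ^ (p - 1)) / (∑ u : V, ϱ u * f u ^ (p - 1)) ∧
      Finset.univ.inf' Finset.univ_nonempty (fun u : V => κ u / ϱ u) ≤ lam ∧
      lam ≤ Finset.univ.sup' Finset.univ_nonempty (fun u : V => κ u / ϱ u)) ∧
    Finset.univ.inf' Finset.univ_nonempty (fun u : V => κ u / ϱ u) ≤ lam1 ∧
    lam1 ≤ Finset.univ.sup' Finset.univ_nonempty (fun u : V => κ u / ϱ u) :=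
  stmt9_general G ω κ ϱ p hp hωsymm hωpos hωzero hϱpos lam1 hlam1
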